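/- arXiv:1704.08783 — 5 statements merged into one kernel-verified Lean document; each statement's English description precedes it below -/
import Mathlib

section
/- Let X be a real random variable with E[X²] < ∞ and let 𝒢 ⊆ ℱ be a sub-σ-algebra. Suppose X satisfies the QVF property with coefficients (β₀, β₁) relative to 𝒢, that β₀ + β₁·E[X|𝒢] ≠ 0 almost surely, and set ω := (β₀ + β₁·E[X|𝒢])⁻¹ (a 𝒢-measurable random variable). Assume ωX and (ωX)² are integrable. Then almost surely E[(ωX)²|𝒢] − (E[ωX|𝒢])² = E[ωX|𝒢]; i.e., the conditional variance of the transformed variable ωX given 𝒢 equals its conditional mean given 𝒢. -/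
open MeasureTheory

/-- If `X` satisfies the QVF property with coefficients `(β₀, β₁)` relative to
the sub-σ-algebra `𝒢`, `β₀ + β₁·E[X|𝒢] ≠ 0` a.s., and `W = (β₀ + β₁·E[X|𝒢])⁻¹ · X` is the
transformed variable, then almost surely the conditional variance of `W` given `𝒢` equals its
conditional mean given `𝒢`. -/
theorem qvf_transform_condVar_eq_condMean
    {Ω : Type*} [MeasurableSpace Ω] {μ : Measure Ω} [IsProbabilityMeasure μ]
    (𝒢 : MeasurableSpace Ω) (h𝒢 : 𝒢 ≤ ‹MeasurableSpace Ω›)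
    (X : Ω → ℝ)
    (hX : Integrable X μ) (hX2 : Integrable (fun a => X a ^ 2) μ)
    (β₀ β₁ : ℝ)
    (hQVF : ∀ᵐ a ∂μ,
      (μ[fun a' => X a' ^ 2 | 𝒢]) a - ((μ[X | 𝒢]) a) ^ 2
        = β₀ * (μ[X | 𝒢]) a + β₁ * ((μ[X | 𝒢]) a) ^ 2)
    (hne : ∀ᵐ a ∂μ, β₀ + β₁ * (μ[X | 𝒢]) a ≠ 0)
    (W : Ω → ℝ)
    (hW : ∀ a, W a = (β₀ + β₁ * (μ[X | 𝒢]) a)⁻¹ * X a)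
    (hWint : Integrable W μ) (hW2int : Integrable (fun a => W a ^ 2) μ) :
    ∀ᵐ a ∂μ,
      (μ[fun a' => W a' ^ 2 | 𝒢]) a - ((μ[W | 𝒢]) a) ^ 2 = (μ[W | 𝒢]) a := by
  set g : Ω → ℝ := fun a => (β₀ + β₁ * (μ[X | 𝒢]) a)⁻¹ with hg
  have hgm : StronglyMeasurable[𝒢] g := by
    have h1 : StronglyMeasurable[𝒢] (μ[X | 𝒢]) := stronglyMeasurable_condExp
    exact (((stronglyMeasurable_const.add
      (stronglyMeasurable_const.mul h1)).measurable.inv).stronglyMeasurable)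
  have hWeq : W = g * X := by funext a; exact hW a
  have hW2eq : (fun a => W a ^ 2) = (fun a => g a ^ 2) * (fun a => X a ^ 2) := by
    funext a; rw [hW a, mul_pow]; rfl
  have hgm2 : StronglyMeasurable[𝒢] (fun a => g a ^ 2) := by
    have : (fun a => g a ^ 2) = g * g := by funext a; rw [sq]; rfl
    rw [this]; exact hgm.mul hgm
  have hc1 : μ[W | 𝒢] =ᵐ[μ] g * μ[X | 𝒢] := by
    rw [hWeq]
    exact condExp_mul_of_stronglyMeasurable_left hgm (hWeq ▸ hWint) hX
  have hc2 : μ[fun a' => W a' ^ 2 | 𝒢] =ᵐ[μ] (fun a => g a ^ 2) * μ[fun a' => X a' ^ 2 | 𝒢] := by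
    rw [hW2eq]
    exact condExp_mul_of_stronglyMeasurable_left hgm2 (hW2eq ▸ hW2int) hX2
  filter_upwards [hQVF, hne, hc1, hc2] with a hq hn h1 h2
  rw [h2, h1]
  simp only [Pi.mul_apply]
  have key : (μ[fun a' => X a' ^ 2 | 𝒢]) a
      = ((μ[X | 𝒢]) a) ^ 2 + β₀ * (μ[X | 𝒢]) a + β₁ * ((μ[X | 𝒢]) a) ^ 2 := by linarith
  rw [key, hg]
  field_simp
  ring
end

section
/- (Proposition A11, quantitative overdispersion.) Let X be a real random variable with E[X²] < ∞ and let 𝒢 ⊆ ℋ ⊆ ℱ be nested sub-σ-algebras. Set m := E[X|ℋ] and assume m² is integrable. Suppose X satisfies the QVF property with coefficients (β₀, β₁) relative to ℋ, that β₁ > −1, and that there are constants M_min > 0 and ω₀ > 0 such that almost surely E[m²|𝒢] − (E[m|𝒢])² ≥ M_min and 0 < (β₀ + β₁·E[X|𝒢])² ≤ ω₀². Set ω := (β₀ + β₁·E[X|𝒢])⁻¹. Then almost surely ω²·Var(X|𝒢) − ω·E[X|𝒢] ≥ (1 + β₁)·M_min / ω₀². -/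
open MeasureTheory

/-!
Averaging the QVF identity over `𝒢` (tower property) gives
`E[X²|𝒢] = (1 + β₁)·E[m²|𝒢] + β₀·E[X|𝒢]`, hence
`Var(X|𝒢) = (1 + β₁)·Var(m|𝒢) + (β₀ + β₁·E[X|𝒢])·E[X|𝒢]`.
With `w = (β₀ + β₁·E[X|𝒢])⁻¹` the second term cancels against `w·E[X|𝒢]`, leaving
`w²·Var(X|𝒢) − w·E[X|𝒢] = (1 + β₁)·Var(m|𝒢) / (β₀ + β₁·E[X|𝒢])²`,
which the assumed bounds control from below.
-/

theorem condExp_sq_ae_eq_of_qvf {Ω : Type*} {m₀ : MeasurableSpace Ω} {μ : Measure Ω}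
    {𝒢 ℋ : MeasurableSpace Ω} (h𝒢ℋ : 𝒢 ≤ ℋ) (hℋ : ℋ ≤ m₀) [SigmaFinite (μ.trim hℋ)]
    {X : Ω → ℝ} {β₀ β₁ : ℝ} (hm2 : Integrable (fun a => (μ[X | ℋ]) a ^ 2) μ)
    (hQVF : ∀ᵐ a ∂μ,
      (μ[fun a' => X a' ^ 2 | ℋ]) a - ((μ[X | ℋ]) a) ^ 2
        = β₀ * (μ[X | ℋ]) a + β₁ * ((μ[X | ℋ]) a) ^ 2) :
    μ[fun a => X a ^ 2 | 𝒢] =ᵐ[μ]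
      (1 + β₁) • μ[fun a => (μ[X | ℋ]) a ^ 2 | 𝒢] + β₀ • μ[X | 𝒢] := by
  have hsq : μ[fun a => X a ^ 2 | ℋ] =ᵐ[μ]
      (1 + β₁) • (fun a => (μ[X | ℋ]) a ^ 2) + β₀ • μ[X | ℋ] := by
    filter_upwards [hQVF] with a ha
    simp only [Pi.add_apply, Pi.smul_apply, smul_eq_mul]
    linarith
  calc μ[fun a => X a ^ 2 | 𝒢]
      =ᵐ[μ] μ[μ[fun a => X a ^ 2 | ℋ] | 𝒢] := (condExp_condExp_of_le h𝒢ℋ hℋ).symm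
    _ =ᵐ[μ] μ[(1 + β₁) • (fun a => (μ[X | ℋ]) a ^ 2) + β₀ • μ[X | ℋ] | 𝒢] :=
      condExp_congr_ae hsq
    _ =ᵐ[μ] μ[(1 + β₁) • (fun a => (μ[X | ℋ]) a ^ 2) | 𝒢] + μ[β₀ • μ[X | ℋ] | 𝒢] :=
      condExp_add (hm2.smul _) (integrable_condExp.smul _) 𝒢
    _ =ᵐ[μ] (1 + β₁) • μ[fun a => (μ[X | ℋ]) a ^ 2 | 𝒢] + β₀ • μ[μ[X | ℋ] | 𝒢] :=
      (condExp_smul _ _ 𝒢).add (condExp_smul _ _ 𝒢)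
    _ =ᵐ[μ] (1 + β₁) • μ[fun a => (μ[X | ℋ]) a ^ 2 | 𝒢] + β₀ • μ[X | 𝒢] :=
      .add .rfl ((condExp_condExp_of_le h𝒢ℋ hℋ).const_smul β₀)

/-- When `ℋ` is not a sub-σ-algebra, `μ[f | ℋ]` is the junk value `0`, whose conditional
variance vanishes. -/
theorem le_of_pos_le_condExp_sq_sub_sq {Ω : Type*} {m₀ : MeasurableSpace Ω} {μ : Measure Ω}
    [NeZero μ] {𝒢 ℋ : MeasurableSpace Ω} {f : Ω → ℝ} {c : ℝ} (hc : 0 < c)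
    (h : ∀ᵐ a ∂μ, c ≤ (μ[fun a' => (μ[f | ℋ]) a' ^ 2 | 𝒢]) a - ((μ[μ[f | ℋ] | 𝒢]) a) ^ 2) :
    ℋ ≤ m₀ := by
  by_contra hℋ
  obtain ⟨a, ha⟩ := h.exists
  exact hc.not_ge (by simpa [condExp_of_not_le hℋ] using ha)

/-- Pointwise form of the statement, with `u = E[X|𝒢]` and `M₂ = E[m²|𝒢]`. -/
theorem qvf_score_lower_bound {β₀ β₁ Mmin ω₀ u M₂ : ℝ} (hβ₁ : -1 < β₁) (hMmin : 0 < Mmin)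
    (hvar : Mmin ≤ M₂ - u ^ 2) (hc : 0 < (β₀ + β₁ * u) ^ 2) (hcω : (β₀ + β₁ * u) ^ 2 ≤ ω₀ ^ 2) :
    (1 + β₁) * Mmin / ω₀ ^ 2
      ≤ (β₀ + β₁ * u)⁻¹ ^ 2 * ((1 + β₁) * M₂ + β₀ * u - u ^ 2) - (β₀ + β₁ * u)⁻¹ * u := by
  have hc₀ : β₀ + β₁ * u ≠ 0 := by
    rintro h
    simp [h] at hc
  have hscore : (β₀ + β₁ * u)⁻¹ ^ 2 * ((1 + β₁) * M₂ + β₀ * u - u ^ 2) - (β₀ + β₁ * u)⁻¹ * u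
      = (1 + β₁) * (M₂ - u ^ 2) / (β₀ + β₁ * u) ^ 2 := by
    field_simp
    ring
  rw [hscore]
  exact div_le_div₀ (mul_nonneg (by linarith) (by linarith))
    (mul_le_mul_of_nonneg_left hvar (by linarith)) hc hcω

/-- **Proposition A11, quantitative overdispersion.** With nested
sub-σ-algebras `𝒢 ≤ ℋ`, `m := E[X|ℋ]`, QVF coefficients `(β₀, β₁)` with `β₁ > −1` relative
to `ℋ`, constants `M_min > 0`, `ω₀ > 0` with, almost surely,
`E[m²|𝒢] − (E[m|𝒢])² ≥ M_min` and `0 < (β₀ + β₁·E[X|𝒢])² ≤ ω₀²`, and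
`w := (β₀ + β₁·E[X|𝒢])⁻¹`, almost surely
`w²·Var(X|𝒢) − w·E[X|𝒢] ≥ (1 + β₁)·M_min / ω₀²`. -/
theorem qvf_conditional_score_quantitative
    {Ω : Type*} [MeasurableSpace Ω] {μ : Measure Ω} [IsProbabilityMeasure μ]
    (𝒢 ℋ : MeasurableSpace Ω) (h𝒢ℋ : 𝒢 ≤ ℋ) (hℋ : ℋ ≤ ‹MeasurableSpace Ω›)
    (X : Ω → ℝ)
    (hX : Integrable X μ) (hX2 : Integrable (fun a => X a ^ 2) μ)
    (m : Ω → ℝ) (hm : m = μ[X | ℋ])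
    (hm2 : Integrable (fun a => (m a) ^ 2) μ)
    (β₀ β₁ : ℝ)
    (hQVF : ∀ᵐ a ∂μ,
      (μ[fun a' => X a' ^ 2 | ℋ]) a - ((μ[X | ℋ]) a) ^ 2
        = β₀ * (μ[X | ℋ]) a + β₁ * ((μ[X | ℋ]) a) ^ 2)
    (hβ₁ : β₁ > -1)
    (Mmin ω₀ : ℝ) (hMmin : 0 < Mmin) (hω₀ : 0 < ω₀)
    (hVarLB : ∀ᵐ a ∂μ,
      Mmin ≤ (μ[fun a' => (m a') ^ 2 | 𝒢]) a - ((μ[m | 𝒢]) a) ^ 2)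
    (hωbd : ∀ᵐ a ∂μ,
      0 < (β₀ + β₁ * (μ[X | 𝒢]) a) ^ 2 ∧ (β₀ + β₁ * (μ[X | 𝒢]) a) ^ 2 ≤ ω₀ ^ 2)
    (w : Ω → ℝ) (hw : ∀ a, w a = (β₀ + β₁ * (μ[X | 𝒢]) a)⁻¹) :
    ∀ᵐ a ∂μ,
      (1 + β₁) * Mmin / ω₀ ^ 2
        ≤ (w a) ^ 2 * ((μ[fun a' => X a' ^ 2 | 𝒢]) a - ((μ[X | 𝒢]) a) ^ 2)
            - w a * (μ[X | 𝒢]) a := by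
  subst hm
  have hℋ₀ := le_of_pos_le_condExp_sq_sub_sq hMmin hVarLB
  filter_upwards [condExp_sq_ae_eq_of_qvf h𝒢ℋ hℋ₀ hm2 hQVF,
    condExp_condExp_of_le (f := X) h𝒢ℋ hℋ₀, hVarLB, hωbd] with a hsq htower hvar ⟨hc, hcω⟩
  rw [htower] at hvar
  simp only [Pi.add_apply, Pi.smul_apply, smul_eq_mul] at hsq
  rw [hw, hsq]
  exact qvf_score_lower_bound hβ₁ hMmin hvar hc hcω
end

section
/- (Proposition: strict dual feasibility from block equations.) Let V be a finite index set, S ⊆ V, Q : V×V → ℝ a matrix whose principal submatrix Q_{SS} is invertible, and let W, R, Z, Δ : V → ℝ be vectors with Δ_t = 0 for all t ∉ S. Let λ > 0 and α ∈ (0, 1]. Assume: (i) for every t ∈ V, (Q·Δ)_t = W_t − λ·Z_t + R_t; (ii) |Z_t| ≤ 1 for all t ∈ S; (iii) incoherence: for every t ∉ S, Σ_{s∈S} |(Q_{S^cS}·Q_{SS}⁻¹)_{t,s}| ≤ 1 − α; (iv) max_{t∈V} |W_t| ≤ λα/(4(2−α)) and max_{t∈V} |R_t| ≤ λα/(4(2−α)).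 Then for every t ∉ S, |Z_t| ≤ 1 − α/2 < 1. -/
/-!
As `Δ` is supported on `S`, the equations on `S` read `Q_{SS} Δ_S = (QΔ)_S`, hence
`Δ_S = Q_{SS}⁻¹ (QΔ)_S` and `(QΔ)_t = Q_{tS} Q_{SS}⁻¹ (QΔ)_S` for every `t`. On `S`,
`|(QΔ)_s| = |W_s − λZ_s + R_s| ≤ λ + 2ε` with `ε = λα/(4(2−α))`, so incoherence gives
`|(QΔ)_t| ≤ (1 − α)(λ + 2ε)` off `S`, and then
`λ|Z_t| = |W_t + R_t − (QΔ)_t| ≤ 2ε + (1 − α)(λ + 2ε) = λ(1 − α/2)`.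
-/

open Matrix Finset

namespace Matrix

variable {m n R : Type*} [Fintype n]

theorem mulVec_eq_submatrix_mulVec_of_support [CommRing R] (S : Finset n) (A : Matrix m n R)
    {v : n → R} (hv : ∀ j ∉ S, v j = 0) :
    A *ᵥ v = A.submatrix id ((↑) : S → n) *ᵥ fun s => v s := by
  funext i
  simp only [mulVec, dotProduct, submatrix_apply, id]
  rw [sum_coe_sort S fun j => A i j * v j]
  exact (sum_subset (subset_univ S) fun j _ hj => by rw [hv j hj, mul_zero]).symm

theorem mulVec_eq_mul_inv_mulVec_of_support [CommRing R] [DecidableEq n] (S : Finset n)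
    (A : Matrix n n R) (hA : IsUnit (A.submatrix ((↑) : S → n) ((↑) : S → n))) {v : n → R}
    (hv : ∀ j ∉ S, v j = 0) :
    A *ᵥ v = (A.submatrix id ((↑) : S → n) * (A.submatrix ((↑) : S → n) ((↑) : S → n))⁻¹) *ᵥ
      fun s => (A *ᵥ v) s := by
  have hrestrict : (fun s : S => (A *ᵥ v) s) =
      A.submatrix ((↑) : S → n) ((↑) : S → n) *ᵥ fun s => v s := by
    rw [mulVec_eq_submatrix_mulVec_of_support S A hv]
    rfl
  rw [hrestrict, mulVec_mulVec, Matrix.mul_assoc,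
    nonsing_inv_mul _ ((isUnit_iff_isUnit_det _).mp hA), Matrix.mul_one,
    ← mulVec_eq_submatrix_mulVec_of_support S A hv]

theorem abs_mulVec_apply_le [CommRing R] [LinearOrder R] [IsStrictOrderedRing R]
    (B : Matrix m n R) (u : n → R) {M : R} (hu : ∀ j, |u j| ≤ M) (i : m) :
    |(B *ᵥ u) i| ≤ (∑ j, |B i j|) * M := calc
  |(B *ᵥ u) i| ≤ ∑ j, |B i j| * |u j| := by
    simpa only [mulVec, dotProduct, abs_mul] using abs_sum_le_sum_abs (fun j => B i j * u j) univ
  _ ≤ ∑ j, |B i j| * M := by gcongr with j; exact hu j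
  _ = (∑ j, |B i j|) * M := (sum_mul _ _ _).symm

end Matrix

/-- **strict dual feasibility from block equations.** Deterministic linear-algebra
step of the primal–dual witness argument: from the block equations `Q·Δ = W − λ·Z + R` with
`Δ` supported on `S`, invertibility of `Q_{SS}`, dual feasibility `|Z_t| ≤ 1` on `S`,
incoherence `‖Q_{S^cS}·Q_{SS}⁻¹‖_{∞,row} ≤ 1 − α`, and
`‖W‖_∞, ‖R‖_∞ ≤ λα/(4(2−α))`, one gets `|Z_t| ≤ 1 − α/2 < 1` for every `t ∉ S`. -/
theorem strict_dual_feasibility_block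
    {V : Type*} [Fintype V] [DecidableEq V]
    (S : Finset V) (Q : Matrix V V ℝ)
    (Qss : Matrix {x // x ∈ S} {x // x ∈ S} ℝ)
    (hQss : Qss = Q.submatrix (fun s : {x // x ∈ S} => (s : V)) (fun s : {x // x ∈ S} => (s : V)))
    (hinv : IsUnit Qss)
    (W R Z Δ : V → ℝ)
    (hΔ : ∀ t ∉ S, Δ t = 0)
    (lam α : ℝ) (hlam : 0 < lam) (hα : 0 < α) (hα1 : α ≤ 1)
    (heq : ∀ t, Q.mulVec Δ t = W t - lam * Z t + R t)
    (hZS : ∀ t ∈ S, |Z t| ≤ 1)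
    (hinc : ∀ t ∉ S,
      ∑ s : {x // x ∈ S}, |∑ s' : {x // x ∈ S}, Q t (s' : V) * (Qss⁻¹ s' s)| ≤ 1 - α)
    (hW : ∀ t, |W t| ≤ lam * α / (4 * (2 - α)))
    (hR : ∀ t, |R t| ≤ lam * α / (4 * (2 - α))) :
    ∀ t ∉ S, |Z t| ≤ 1 - α / 2 ∧ |Z t| < 1 := by
  subst hQss
  set ε := lam * α / (4 * (2 - α))
  have h2α : 0 < 2 - α := by linarith
  have hε : 0 ≤ ε := by positivity
  have hQΔS (s : S) : |(Q *ᵥ Δ) s| ≤ lam + 2 * ε := by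
    have hZs : lam * |Z s| ≤ lam := mul_le_of_le_one_right hlam.le (hZS s s.2)
    rw [heq, sub_eq_add_neg]
    calc |W s + -(lam * Z s) + R s| ≤ |W s| + |-(lam * Z s)| + |R s| := abs_add_three _ _ _
      _ ≤ lam + 2 * ε := by rw [abs_neg, abs_mul, abs_of_pos hlam]; linarith [hW s, hR s]
  intro t ht
  have hQΔt : |(Q *ᵥ Δ) t| ≤ (1 - α) * (lam + 2 * ε) := by
    rw [mulVec_eq_mul_inv_mulVec_of_support S Q hinv hΔ]
    exact (abs_mulVec_apply_le _ _ hQΔS t).trans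
      (mul_le_mul_of_nonneg_right (hinc t ht) (by positivity))
  -- `ε` is chosen so that the noise terms use up exactly half of the incoherence margin.
  have hZt : lam * |Z t| ≤ lam * (1 - α / 2) := calc
    lam * |Z t| = |lam * Z t| := by rw [abs_mul, abs_of_pos hlam]
    _ = |W t + R t - (Q *ᵥ Δ) t| := by rw [heq]; congr 1; ring
    _ ≤ |W t| + |R t| + |(Q *ᵥ Δ) t| := (abs_sub _ _).trans (add_le_add_left (abs_add_le _ _) _)
    _ ≤ 2 * ε + (1 - α) * (lam + 2 * ε) := by linarith [hW t, hR t]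
    _ = lam * (1 - α / 2) := by simp only [ε]; field_simp; ring
  have hZt' := le_of_mul_le_mul_left hZt hlam
  exact ⟨hZt', hZt'.trans_lt (by linarith)⟩
end

section
/- (Primal–dual witness lemma for ℓ₁-penalized minimization.) Let p ≥ 1, f : ℝ^p → ℝ, λ > 0, S ⊆ {1,…,p}, and let θ̃ ∈ ℝ^p with θ̃_t = 0 for all t ∉ S. Suppose there exist g, z ∈ ℝ^p such that: (i) f(θ) ≥ f(θ̃) + ⟨g, θ − θ̃⟩ for all θ ∈ ℝ^p (g is a subgradient of f at θ̃); (ii) g + λ·z = 0; (iii) |z_t| ≤ 1 and z_t·θ̃_t = |θ̃_t| for all t; and (iv) |z_t| < 1 for all t ∉ S. Then θ̃ minimizes F(θ) := f(θ) + λ·Σ_t |θ_t| over ℝ^p, and every minimizer θ̂ of F satisfies θ̂_t = 0 for all t ∉ S. -/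
/-!
Write `F θ = f θ + λ‖θ‖₁`. Combining the subgradient inequality for `f` with `g = -λz` and
`⟨z, θ̃⟩ = ‖θ̃‖₁` gives `F θ ≥ F θ̃ + λ ∑ₜ (|θₜ| - zₜθₜ)` for every `θ`. Each term of the slack sum
is nonnegative because `|zₜ| ≤ 1`, so `θ̃` minimizes `F`. If `θ̂` is another minimizer, the slack
at `θ̂` must vanish, forcing `zₜθ̂ₜ = |θ̂ₜ|`, which is impossible for `θ̂ₜ ≠ 0` when `|zₜ| < 1`.
-/

open Finset

lemma mul_le_abs_of_abs_le_one {z x : ℝ} (hz : |z| ≤ 1) : z * x ≤ |x| :=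
  calc z * x ≤ |z * x| := le_abs_self _
    _ = |z| * |x| := abs_mul z x
    _ ≤ |x| := mul_le_of_le_one_left (abs_nonneg x) hz

lemma eq_zero_of_abs_le_mul_of_abs_lt_one {z x : ℝ} (hz : |z| < 1) (hx : |x| ≤ z * x) :
    x = 0 := by
  by_contra hne
  have : |x| < |x| :=
    calc |x| ≤ z * x := hx
      _ ≤ |z * x| := le_abs_self _
      _ = |z| * |x| := abs_mul z x
      _ < |x| := mul_lt_of_lt_one_left (abs_pos.2 hne) hz
  exact this.false

section L1Penalized

variable {ι : Type*} [Fintype ι]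

noncomputable def l1Penalized (f : (ι → ℝ) → ℝ) (lam : ℝ) (θ : ι → ℝ) : ℝ :=
  f θ + lam * ∑ i, |θ i|

lemma sum_abs_sub_mul_nonneg {z : ι → ℝ} (hz : ∀ i, |z i| ≤ 1) (θ : ι → ℝ) :
    0 ≤ ∑ i, (|θ i| - z i * θ i) :=
  sum_nonneg fun i _ => sub_nonneg.2 (mul_le_abs_of_abs_le_one (hz i))

lemma l1Penalized_add_slack_le {f : (ι → ℝ) → ℝ} {lam : ℝ} {θt g z : ι → ℝ}
    (hsub : ∀ θ, f θt + ∑ i, g i * (θ i - θt i) ≤ f θ) (hstat : ∀ i, g i + lam * z i = 0)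
    (hz : ∀ i, z i * θt i = |θt i|) (θ : ι → ℝ) :
    l1Penalized f lam θt + lam * ∑ i, (|θ i| - z i * θ i) ≤ l1Penalized f lam θ := by
  have hinner : ∑ i, g i * (θ i - θt i) = lam * ∑ i, |θt i| - lam * ∑ i, z i * θ i := by
    rw [mul_sum, mul_sum, ← sum_sub_distrib]
    refine sum_congr rfl fun i _ => ?_
    rw [← hz i, show g i = -(lam * z i) by linarith [hstat i]]
    ring
  have := hsub θ
  rw [hinner] at this
  rw [l1Penalized, l1Penalized, sum_sub_distrib]
  linarith

lemma abs_le_mul_of_sum_abs_sub_mul_eq_zero {z θ : ι → ℝ} (hz : ∀ i, |z i| ≤ 1)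
    (hslack : ∑ i, (|θ i| - z i * θ i) = 0) (t : ι) : |θ t| ≤ z t * θ t :=
  sub_nonpos.1 ((sum_eq_zero_iff_of_nonneg fun i _ =>
    sub_nonneg.2 (mul_le_abs_of_abs_le_one (hz i))).1 hslack t (mem_univ t)).le

end L1Penalized

theorem primal_dual_witness_l1_general
    (p : ℕ)
    (f : (Fin p → ℝ) → ℝ) (lam : ℝ) (hlam : 0 < lam)
    (S : Finset (Fin p))
    (θt : Fin p → ℝ)
    (g z : Fin p → ℝ)
    (hsub : ∀ θ : Fin p → ℝ, f θt + ∑ i, g i * (θ i - θt i) ≤ f θ)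
    (hstat : ∀ i, g i + lam * z i = 0)
    (hz1 : ∀ t, |z t| ≤ 1)
    (hz2 : ∀ t, z t * θt t = |θt t|)
    (hz3 : ∀ t ∉ S, |z t| < 1) :
    (∀ θ : Fin p → ℝ, f θt + lam * ∑ i, |θt i| ≤ f θ + lam * ∑ i, |θ i|) ∧
    (∀ θh : Fin p → ℝ,
      (∀ θ : Fin p → ℝ, f θh + lam * ∑ i, |θh i| ≤ f θ + lam * ∑ i, |θ i|) →
      ∀ t ∉ S, θh t = 0) := by
  have key := l1Penalized_add_slack_le hsub hstat hz2
  unfold l1Penalized at key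
  refine ⟨fun θ => ?_, fun θh hmin t ht => ?_⟩
  · have := mul_nonneg hlam.le (sum_abs_sub_mul_nonneg hz1 θ)
    linarith [key θ]
  · have hslack : ∑ i, (|θh i| - z i * θh i) = 0 := by
      have : lam * ∑ i, (|θh i| - z i * θh i) ≤ 0 := by linarith [key θh, hmin θt]
      exact le_antisymm (nonpos_of_mul_nonpos_right this hlam) (sum_abs_sub_mul_nonneg hz1 θh)
    exact eq_zero_of_abs_le_mul_of_abs_lt_one (hz3 t ht)
      (abs_le_mul_of_sum_abs_sub_mul_eq_zero hz1 hslack t)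

/-- **primal–dual witness lemma for ℓ₁-penalized minimization.** If `θ̃` is
supported on `S`, `g` is a subgradient of `f` at `θ̃`, the stationarity condition
`g + λ·z = 0` holds with `z` a subgradient of the ℓ₁-norm at `θ̃` (`|z_t| ≤ 1`,
`z_t·θ̃_t = |θ̃_t|`) that is strictly dual feasible off `S` (`|z_t| < 1` for `t ∉ S`), then `θ̃`
minimizes `F(θ) = f(θ) + λ·‖θ‖₁` and every minimizer of `F` vanishes off `S`. -/
theorem primal_dual_witness_l1
    (p : ℕ) (hp : 1 ≤ p)
    (f : (Fin p → ℝ) → ℝ) (lam : ℝ) (hlam : 0 < lam)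
    (S : Finset (Fin p))
    (θt : Fin p → ℝ) (hθt : ∀ t ∉ S, θt t = 0)
    (g z : Fin p → ℝ)
    (hsub : ∀ θ : Fin p → ℝ, f θt + ∑ i, g i * (θ i - θt i) ≤ f θ)
    (hstat : ∀ i, g i + lam * z i = 0)
    (hz1 : ∀ t, |z t| ≤ 1)
    (hz2 : ∀ t, z t * θt t = |θt t|)
    (hz3 : ∀ t ∉ S, |z t| < 1) :
    (∀ θ : Fin p → ℝ, f θt + lam * ∑ i, |θt i| ≤ f θ + lam * ∑ i, |θ i|) ∧
    (∀ θh : Fin p → ℝ,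
      (∀ θ : Fin p → ℝ, f θh + lam * ∑ i, |θh i| ≤ f θ + lam * ∑ i, |θ i|) →
      ∀ t ∉ S, θh t = 0) :=
  primal_dual_witness_l1_general p f lam hlam S θt g z hsub hstat hz1 hz2 hz3
end

section
/- (Lemma 3.1, restricted faithfulness.) Let X = (X₁, …, X_p) be a random vector with square-integrable real coordinates, let j ∈ {1,…,p}, let S ⊆ {1,…,p}∖{j}, let A′ : ℝ → ℝ be a function, and let θ* consist of an intercept θ*₀ ∈ ℝ and coefficients (θ*_s)_{s∈S}. Define η* := θ*₀ + Σ_{s∈S} θ*_s·X_s, and for k ∈ S define η*_{−k} := θ*₀ + Σ_{s∈S, s≠k} θ*_s·X_s. Assume the first-order optimality conditions hold: E[X_j] = E[A′(η*)] and E[X_j·X_k] = E[A′(η*)·X_k] (all displayed expectations being finite). If Cov(X_j, X_k) ≠ Cov(A′(η*_{−k}), X_k), then θ*_k ≠ 0. -/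
open MeasureTheory

/-- **Lemma 3.1, restricted faithfulness.** With `η* = θ*₀ + Σ_{s∈S} θ*_s·X_s`
and `η*_{−k} = θ*₀ + Σ_{s∈S,s≠k} θ*_s·X_s`, if the first-order optimality conditions
`E[X_j] = E[A′(η*)]` and `E[X_j·X_k] = E[A′(η*)·X_k]` hold and
`Cov(X_j, X_k) ≠ Cov(A′(η*_{−k}), X_k)`, then `θ*_k ≠ 0`. -/
theorem restricted_faithfulness
    {Ω : Type*} [MeasurableSpace Ω] {μ : Measure Ω} [IsProbabilityMeasure μ]
    (p : ℕ) (X : Fin p → Ω → ℝ)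
    (hX2 : ∀ s, Integrable (fun a => X s a ^ 2) μ)
    (j k : Fin p) (S : Finset (Fin p)) (hj : j ∉ S) (hk : k ∈ S)
    (A' : ℝ → ℝ) (θ₀ : ℝ) (θ : Fin p → ℝ)
    (ηs : Ω → ℝ) (hηs : ηs = fun a => θ₀ + ∑ s ∈ S, θ s * X s a)
    (ηmk : Ω → ℝ) (hηmk : ηmk = fun a => θ₀ + ∑ s ∈ S.erase k, θ s * X s a)
    (h1 : Integrable (X j) μ) (h2 : Integrable (X k) μ)
    (h3 : Integrable (fun a => X j a * X k a) μ)
    (h4 : Integrable (fun a => A' (ηs a)) μ)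
    (h5 : Integrable (fun a => A' (ηs a) * X k a) μ)
    (h6 : Integrable (fun a => A' (ηmk a)) μ)
    (h7 : Integrable (fun a => A' (ηmk a) * X k a) μ)
    (hopt1 : ∫ a, X j a ∂μ = ∫ a, A' (ηs a) ∂μ)
    (hopt2 : ∫ a, X j a * X k a ∂μ = ∫ a, A' (ηs a) * X k a ∂μ)
    (hcov :
      (∫ a, X j a * X k a ∂μ) - (∫ a, X j a ∂μ) * (∫ a, X k a ∂μ)
        ≠ (∫ a, A' (ηmk a) * X k a ∂μ) - (∫ a, A' (ηmk a) ∂μ) * (∫ a, X k a ∂μ)) :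
    θ k ≠ 0 := by
  intro h0
  apply hcov
  have heq : ηmk = ηs := by
    rw [hηs, hηmk]
    funext a
    congr 1
    exact Finset.sum_erase S (by rw [h0, zero_mul])
  rw [heq, hopt1, hopt2]
end
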